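/- There exists a constant c > 0 such that for every finite set S of axis-aligned squares whose side lengths all lie in [d, ψ·d] for some d > 0 and ψ ≥ 1, and every σ ∈ S, the set 𝒞(σ) has at most c·ψ elements. -/

import Mathlib

open Set

/-- A dyadic cell at level `level` (side length `2^level`) with lower-left corner
`(a·2^level, b·2^level)`. -/
structure DyadicCell where
  level : ℤ
  a : ℤ
  b : ℤ
deriving DecidableEq

/-- The side length of a dyadic cell. -/
noncomputable def DyadicCell.side (C : DyadicCell) : ℝ := 2 ^ C.level

/-- The dyadic cell as a subset of the plane. -/
noncomputable def DyadicCell.toSet (C : DyadicCell) : Set (ℝ × ℝ) :=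
  Set.Icc ((C.a : ℝ) * 2 ^ C.level) ((C.a + 1 : ℝ) * 2 ^ C.level) ×ˢ
    Set.Icc ((C.b : ℝ) * 2 ^ C.level) ((C.b + 1 : ℝ) * 2 ^ C.level)

/-- `5C`: the square obtained by scaling the cell `C` by a factor `5` about its center. -/
noncomputable def DyadicCell.scale5 (C : DyadicCell) : Set (ℝ × ℝ) :=
  Set.Icc ((C.a - 2 : ℝ) * 2 ^ C.level) ((C.a + 3 : ℝ) * 2 ^ C.level) ×ˢ
    Set.Icc ((C.b - 2 : ℝ) * 2 ^ C.level) ((C.b + 3 : ℝ) * 2 ^ C.level)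

/-- An axis-aligned square `[x, x+s] × [y, y+s]` of side length `s > 0`. -/
structure Square where
  x : ℝ
  y : ℝ
  s : ℝ
  s_pos : 0 < s

/-- The square as a subset of the plane. -/
noncomputable def Square.toSet (σ : Square) : Set (ℝ × ℝ) :=
  Set.Icc σ.x (σ.x + σ.s) ×ˢ Set.Icc σ.y (σ.y + σ.s)

/-- The center of a square. -/
noncomputable def Square.center (σ : Square) : ℝ × ℝ := (σ.x + σ.s / 2, σ.y + σ.s / 2)

/-- `C` is a storing cell of `σ`: a dyadic cell of maximal side length among those that
contain the center of `σ` and are contained in `σ`. -/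
def IsStoringCell (σ : Square) (C : DyadicCell) : Prop :=
  σ.center ∈ C.toSet ∧ C.toSet ⊆ σ.toSet ∧
    ∀ D : DyadicCell, σ.center ∈ D.toSet → D.toSet ⊆ σ.toSet → D.side ≤ C.side

/-- `C` is a storing cell of the set `S` (with fixed storing-cell choice `c`):
some square of `S` is stored in `C`. -/
def IsStoringCellOf (S : Finset Square) (c : Square → DyadicCell) (C : DyadicCell) : Prop :=
  ∃ σ ∈ S, c σ = C

/-- `π(C)`: the squares of `S` stored in `C`. -/
def piCell (S : Finset Square) (c : Square → DyadicCell) (C : DyadicCell) : Set Square :=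
  {σ | σ ∈ S ∧ c σ = C}

/-- `𝒞(σ)`: the dyadic cells `D ⊆ σ` containing at least one storing cell of `S`,
maximal with both properties. -/
def calC (S : Finset Square) (c : Square → DyadicCell) (σ : Square) : Set DyadicCell :=
  {D | D.toSet ⊆ σ.toSet ∧ (∃ E, IsStoringCellOf S c E ∧ E.toSet ⊆ D.toSet) ∧
    ¬ ∃ D' : DyadicCell, D.toSet ⊂ D'.toSet ∧ D'.toSet ⊆ σ.toSet ∧
      ∃ E, IsStoringCellOf S c E ∧ E.toSet ⊆ D'.toSet}

/-- `𝒫(γ)`: the storing cells `D` of `S` with `side(D) ≤ side(γ)` such that `5D`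
intersects the boundary of `γ`. -/
def calP (S : Finset Square) (c : Square → DyadicCell) (γ : Square) : Set DyadicCell :=
  {D | IsStoringCellOf S c D ∧ D.side ≤ γ.s ∧ (D.scale5 ∩ frontier γ.toSet).Nonempty}

lemma two_zpow_pos (ℓ : ℤ) : (0:ℝ) < 2 ^ ℓ := by positivity

lemma cell_subset_iff (D E : DyadicCell) :
    D.toSet ⊆ E.toSet ↔
      ((E.a:ℝ) * 2^E.level ≤ (D.a:ℝ) * 2^D.level ∧
       ((D.a:ℝ)+1) * 2^D.level ≤ ((E.a:ℝ)+1) * 2^E.level ∧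
       (E.b:ℝ) * 2^E.level ≤ (D.b:ℝ) * 2^D.level ∧
       ((D.b:ℝ)+1) * 2^D.level ≤ ((E.b:ℝ)+1) * 2^E.level) := by
  have hD1 : (D.a:ℝ) * 2^D.level ≤ ((D.a:ℝ)+1) * 2^D.level := by
    nlinarith [two_zpow_pos D.level]
  have hD2 : (D.b:ℝ) * 2^D.level ≤ ((D.b:ℝ)+1) * 2^D.level := by
    nlinarith [two_zpow_pos D.level]
  unfold DyadicCell.toSet
  rw [Set.prod_subset_prod_iff]
  constructor
  · rintro (⟨h1, h2⟩ | h | h)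
    · rw [Set.Icc_subset_Icc_iff hD1] at h1
      rw [Set.Icc_subset_Icc_iff hD2] at h2
      exact ⟨h1.1, h1.2, h2.1, h2.2⟩
    · exact absurd h (Set.nonempty_Icc.mpr hD1).ne_empty
    · exact absurd h (Set.nonempty_Icc.mpr hD2).ne_empty
  · rintro ⟨h1, h2, h3, h4⟩
    exact Or.inl ⟨Set.Icc_subset_Icc h1 h2, Set.Icc_subset_Icc h3 h4⟩

lemma cell_subset_square_iff (D : DyadicCell) (σ : Square) :
    D.toSet ⊆ σ.toSet ↔
      (σ.x ≤ (D.a:ℝ) * 2^D.level ∧ ((D.a:ℝ)+1) * 2^D.level ≤ σ.x + σ.s ∧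
       σ.y ≤ (D.b:ℝ) * 2^D.level ∧ ((D.b:ℝ)+1) * 2^D.level ≤ σ.y + σ.s) := by
  have hD1 : (D.a:ℝ) * 2^D.level ≤ ((D.a:ℝ)+1) * 2^D.level := by
    nlinarith [two_zpow_pos D.level]
  have hD2 : (D.b:ℝ) * 2^D.level ≤ ((D.b:ℝ)+1) * 2^D.level := by
    nlinarith [two_zpow_pos D.level]
  unfold DyadicCell.toSet Square.toSet
  rw [Set.prod_subset_prod_iff]
  constructor
  · rintro (⟨h1, h2⟩ | h | h)
    · rw [Set.Icc_subset_Icc_iff hD1] at h1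
      rw [Set.Icc_subset_Icc_iff hD2] at h2
      exact ⟨h1.1, h1.2, h2.1, h2.2⟩
    · exact absurd h (Set.nonempty_Icc.mpr hD1).ne_empty
    · exact absurd h (Set.nonempty_Icc.mpr hD2).ne_empty
  · rintro ⟨h1, h2, h3, h4⟩
    exact Or.inl ⟨Set.Icc_subset_Icc h1 h2, Set.Icc_subset_Icc h3 h4⟩

lemma level_le_of_subset {D E : DyadicCell} (h : D.toSet ⊆ E.toSet) : D.level ≤ E.level := by
  rw [cell_subset_iff] at h
  have : (2:ℝ)^D.level ≤ 2^E.level := by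
    have h1 := h.1; have h2 := h.2.1
    nlinarith
  exact_mod_cast (zpow_le_zpow_iff_right₀ (by norm_num : (1:ℝ) < 2)).mp this

lemma side_le_of_cell_subset_square {D : DyadicCell} {σ : Square} (h : D.toSet ⊆ σ.toSet) :
    (2:ℝ)^D.level ≤ σ.s := by
  rw [cell_subset_square_iff] at h
  have h1 := h.1; have h2 := h.2.1
  nlinarith

lemma storing_side_lower {σ : Square} {C : DyadicCell} (h : IsStoringCell σ C) :
    σ.s / 4 < C.side := by
  set ℓ := Int.log 2 (σ.s / 2) with hℓ
  have hs2 : (0:ℝ) < σ.s / 2 := by linarith [σ.s_pos]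
  have h1 : (2:ℝ)^ℓ ≤ σ.s / 2 := Int.zpow_log_le_self (by norm_num) hs2
  have h2 : σ.s / 2 < (2:ℝ)^(ℓ+1) := Int.lt_zpow_succ_log_self (by norm_num) _
  have hp := two_zpow_pos ℓ
  set cx := σ.x + σ.s / 2
  set cy := σ.y + σ.s / 2
  set D : DyadicCell := ⟨ℓ, ⌊cx / 2^ℓ⌋, ⌊cy / 2^ℓ⌋⟩ with hD
  have hfx1 : (⌊cx / 2^ℓ⌋ : ℝ) * 2^ℓ ≤ cx := by
    rw [← le_div_iff₀ hp]; exact Int.floor_le _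
  have hfx2 : cx < ((⌊cx / 2^ℓ⌋ : ℝ) + 1) * 2^ℓ := by
    rw [← div_lt_iff₀ hp]; exact Int.lt_floor_add_one _
  have hfy1 : (⌊cy / 2^ℓ⌋ : ℝ) * 2^ℓ ≤ cy := by
    rw [← le_div_iff₀ hp]; exact Int.floor_le _
  have hfy2 : cy < ((⌊cy / 2^ℓ⌋ : ℝ) + 1) * 2^ℓ := by
    rw [← div_lt_iff₀ hp]; exact Int.lt_floor_add_one _
  have hmem : σ.center ∈ D.toSet := by
    constructor
    · exact ⟨hfx1, le_of_lt hfx2⟩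
    · exact ⟨hfy1, le_of_lt hfy2⟩
  have hcx : cx = σ.x + σ.s / 2 := rfl
  have hcy : cy = σ.y + σ.s / 2 := rfl
  have hsub : D.toSet ⊆ σ.toSet := by
    rw [cell_subset_square_iff]
    refine ⟨by linarith, by linarith, by linarith, by linarith⟩
  have := h.2.2 D hmem hsub
  have hside : D.side = 2^ℓ := rfl
  rw [hside] at this
  unfold DyadicCell.side at this ⊢
  rw [zpow_add_one₀ (by norm_num : (2:ℝ) ≠ 0)] at h2
  linarith

lemma geom_sum_Icc_le (m n : ℤ) :
    ∑ ℓ ∈ Finset.Icc m n, (2:ℝ)^(-ℓ) ≤ 2 * 2^(-m) := by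
  rcases lt_or_ge n m with h | h
  · rw [Finset.Icc_eq_empty (not_le.mpr h), Finset.sum_empty]
    positivity
  · have key : ∀ k, m ≤ k → ∑ ℓ ∈ Finset.Icc m k, (2:ℝ)^(-ℓ) ≤ 2 * 2^(-m) - 2^(-k) := by
      refine Int.le_induction ?_ ?_
      · rw [Finset.Icc_self, Finset.sum_singleton]
        linarith [zpow_pos (by norm_num : (0:ℝ) < 2) (-m)]
      · intro n hn ih
        have hins : Finset.Icc m (n+1) = insert (n+1) (Finset.Icc m n) := by
          ext k; simp only [Finset.mem_Icc, Finset.mem_insert]; omega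
        have hnotmem : (n+1) ∉ Finset.Icc m n := by simp
        rw [hins, Finset.sum_insert hnotmem]
        have h2 : (2:ℝ)^(-(n+1)) = 2^(-n) * 2⁻¹ := by
          rw [neg_add, zpow_add₀ (by norm_num : (2:ℝ) ≠ 0), zpow_neg_one]
        have hpos : (0:ℝ) < 2^(-n) := by positivity
        rw [h2]
        linarith
    have := key n h
    linarith [zpow_pos (by norm_num : (0:ℝ) < 2) (-n)]

set_option maxHeartbeats 1600000 in
theorem statement11 : ∃ cst : ℝ, 0 < cst ∧
    ∀ (S : Finset Square) (c : Square → DyadicCell),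
      (∀ σ ∈ S, IsStoringCell σ (c σ)) →
    ∀ (d ψ : ℝ), 0 < d → 1 ≤ ψ → (∀ σ ∈ S, d ≤ σ.s ∧ σ.s ≤ ψ * d) →
    ∀ σ ∈ S,
      (calC S c σ).Finite ∧ ((calC S c σ).ncard : ℝ) ≤ cst * ψ := by
  refine ⟨32, by norm_num, ?_⟩
  intro S c hstore d ψ hd hψ hbound σ hσ
  obtain ⟨hds, hsψ⟩ := hbound σ hσ
  have hspos := σ.s_pos
  set ℓ0 : ℤ := Int.log 2 (d/4) + 1 with hℓ0def
  set ℓ1 : ℤ := Int.log 2 (ψ*d) with hℓ1def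
  set amin : ℤ → ℤ := fun ℓ => ⌈σ.x / 2^ℓ⌉ with hamin
  set amax : ℤ → ℤ := fun ℓ => ⌊(σ.x + σ.s) / 2^ℓ⌋ - 1 with hamax
  set bmin : ℤ → ℤ := fun ℓ => ⌈σ.y / 2^ℓ⌉ with hbmin
  set bmax : ℤ → ℤ := fun ℓ => ⌊(σ.y + σ.s) / 2^ℓ⌋ - 1 with hbmax
  set F : ℤ → Finset DyadicCell := fun ℓ =>
    ((({amin ℓ, amax ℓ} : Finset ℤ) ×ˢ Finset.Icc (bmin ℓ) (bmax ℓ)) ∪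
     (Finset.Icc (amin ℓ) (amax ℓ) ×ˢ ({bmin ℓ, bmax ℓ} : Finset ℤ))).image
      (fun p => (⟨ℓ, p.1, p.2⟩ : DyadicCell)) with hF
  set T : Finset DyadicCell := (Finset.Icc ℓ0 ℓ1).biUnion F with hT
  -- the main inclusion
  have hsub : calC S c σ ⊆ ↑T := by
    rintro D ⟨hDσ, ⟨E, hE, hED⟩, hmax⟩
    set ℓ := D.level with hℓdef
    have hp := two_zpow_pos ℓ
    -- level bounds
    obtain ⟨τ, hτS, hcτ⟩ := hE
    have hEst : IsStoringCell τ E := hcτ ▸ hstore τ hτS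
    have hElow : τ.s / 4 < E.side := storing_side_lower hEst
    have hdτ : d ≤ τ.s := (hbound τ hτS).1
    have hEle : (2:ℝ)^E.level ≤ 2^ℓ :=
      zpow_le_zpow_right₀ (by norm_num) (level_le_of_subset hED)
    have hlow : d / 4 < (2:ℝ)^ℓ := by
      have : E.side = 2^E.level := rfl
      linarith [this ▸ hElow]
    have hhigh : (2:ℝ)^ℓ ≤ ψ * d := le_trans (side_le_of_cell_subset_square hDσ) hsψ
    have hd4 : (0:ℝ) < d/4 := by linarith
    have hl0 : ℓ0 ≤ ℓ := by
      have hlog : (2:ℝ)^(Int.log 2 (d/4)) ≤ d/4 := Int.zpow_log_le_self (by norm_num) hd4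
      have : (2:ℝ)^(Int.log 2 (d/4)) < 2^ℓ := lt_of_le_of_lt hlog hlow
      have := (zpow_lt_zpow_iff_right₀ (by norm_num : (1:ℝ) < 2)).mp this
      omega
    have hl1 : ℓ ≤ ℓ1 := by
      have hψd : (0:ℝ) < ψ * d := by nlinarith
      have hlog : ψ * d < (2:ℝ)^(Int.log 2 (ψ*d) + 1) :=
        Int.lt_zpow_succ_log_self (by norm_num) _
      have : (2:ℝ)^ℓ < 2^(Int.log 2 (ψ*d) + 1) := lt_of_le_of_lt hhigh hlog
      have := (zpow_lt_zpow_iff_right₀ (by norm_num : (1:ℝ) < 2)).mp this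
      omega
    -- bounds on a, b from D ⊆ σ
    rw [cell_subset_square_iff] at hDσ
    obtain ⟨hx1, hx2, hy1, hy2⟩ := hDσ
    have haL : amin ℓ ≤ D.a := by
      apply Int.ceil_le.mpr
      rw [div_le_iff₀ hp]
      exact hx1
    have haR : D.a ≤ amax ℓ := by
      have : D.a + 1 ≤ ⌊(σ.x + σ.s) / 2^ℓ⌋ := by
        apply Int.le_floor.mpr
        rw [le_div_iff₀ hp]
        push_cast
        exact hx2
      simp only [hamax]
      omega
    have hbL : bmin ℓ ≤ D.b := by
      apply Int.ceil_le.mpr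
      rw [div_le_iff₀ hp]
      exact hy1
    have hbR : D.b ≤ bmax ℓ := by
      have : D.b + 1 ≤ ⌊(σ.y + σ.s) / 2^ℓ⌋ := by
        apply Int.le_floor.mpr
        rw [le_div_iff₀ hp]
        push_cast
        exact hy2
      simp only [hbmax]
      omega
    -- parent cell
    obtain ⟨k, hk1, hk2⟩ : ∃ k : ℤ, 2*k ≤ D.a ∧ D.a ≤ 2*k + 1 := by
      rcases Int.even_or_odd D.a with ⟨k, hk⟩ | ⟨k, hk⟩
      · exact ⟨k, by omega, by omega⟩
      · exact ⟨k, by omega, by omega⟩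
    obtain ⟨m, hm1, hm2⟩ : ∃ m : ℤ, 2*m ≤ D.b ∧ D.b ≤ 2*m + 1 := by
      rcases Int.even_or_odd D.b with ⟨m, hm⟩ | ⟨m, hm⟩
      · exact ⟨m, by omega, by omega⟩
      · exact ⟨m, by omega, by omega⟩
    set P : DyadicCell := ⟨ℓ + 1, k, m⟩ with hPdef
    have h2pow : (2:ℝ)^(ℓ+1) = 2^ℓ * 2 := zpow_add_one₀ (by norm_num) ℓ
    have hk1' : (2*(k:ℝ)) ≤ (D.a:ℝ) := by exact_mod_cast hk1
    have hk2' : (D.a:ℝ) ≤ 2*(k:ℝ) + 1 := by exact_mod_cast hk2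
    have hm1' : (2*(m:ℝ)) ≤ (D.b:ℝ) := by exact_mod_cast hm1
    have hm2' : (D.b:ℝ) ≤ 2*(m:ℝ) + 1 := by exact_mod_cast hm2
    have hDP : D.toSet ⊆ P.toSet := by
      rw [cell_subset_iff]
      refine ⟨?_, ?_, ?_, ?_⟩ <;> simp only [hPdef, h2pow] <;> nlinarith
    have hPD : ¬ P.toSet ⊆ D.toSet := by
      intro hc
      have := level_le_of_subset hc
      simp only [hPdef] at this
      omega
    have hPnot : ¬ P.toSet ⊆ σ.toSet := by
      intro hc
      exact hmax ⟨P, ⟨hDP, hPD⟩, hc, E, ⟨τ, hτS, hcτ⟩, hED.trans hDP⟩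
    rw [cell_subset_square_iff] at hPnot
    simp only [hPdef, not_and_or, not_le] at hPnot
    -- pinning
    have hpin : (D.a = amin ℓ ∨ D.a = amax ℓ) ∨ (D.b = bmin ℓ ∨ D.b = bmax ℓ) := by
      rcases hPnot with h | h | h | h
      · -- k * 2^(ℓ+1) < σ.x
        left; left
        have : (D.a:ℝ) * 2^ℓ < σ.x + 2^ℓ := by
          rw [h2pow] at h; nlinarith
        have haup : (D.a:ℝ) < σ.x / 2^ℓ + 1 := by
          rw [div_add' _ _ _ (ne_of_gt hp), lt_div_iff₀ hp]; nlinarith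
        have : D.a < amin ℓ + 1 := by
          have hceil : σ.x / 2^ℓ ≤ (amin ℓ : ℝ) := Int.le_ceil _
          have : (D.a:ℝ) < (amin ℓ : ℝ) + 1 := by linarith
          exact_mod_cast this
        omega
      · -- (k+1) * 2^(ℓ+1) > σ.x + σ.s
        left; right
        have : σ.x + σ.s < ((D.a:ℝ) + 2) * 2^ℓ := by
          rw [h2pow] at h; nlinarith
        have : ((⌊(σ.x + σ.s) / 2^ℓ⌋ : ℤ) : ℝ) < (D.a:ℝ) + 2 := by
          have hfl : ((⌊(σ.x + σ.s) / 2^ℓ⌋ : ℤ) : ℝ) ≤ (σ.x + σ.s) / 2^ℓ := Int.floor_le _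
          have : (σ.x + σ.s) / 2^ℓ < (D.a:ℝ) + 2 := by
            rw [div_lt_iff₀ hp]; linarith
          linarith
        have : ⌊(σ.x + σ.s) / 2^ℓ⌋ < D.a + 2 := by exact_mod_cast this
        simp only [hamax] at haR ⊢
        omega
      · right; left
        have : (D.b:ℝ) * 2^ℓ < σ.y + 2^ℓ := by
          rw [h2pow] at h; nlinarith
        have hbup : (D.b:ℝ) < σ.y / 2^ℓ + 1 := by
          rw [div_add' _ _ _ (ne_of_gt hp), lt_div_iff₀ hp]; nlinarith
        have : D.b < bmin ℓ + 1 := by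
          have hceil : σ.y / 2^ℓ ≤ (bmin ℓ : ℝ) := Int.le_ceil _
          have : (D.b:ℝ) < (bmin ℓ : ℝ) + 1 := by linarith
          exact_mod_cast this
        omega
      · right; right
        have : σ.y + σ.s < ((D.b:ℝ) + 2) * 2^ℓ := by
          rw [h2pow] at h; nlinarith
        have : ((⌊(σ.y + σ.s) / 2^ℓ⌋ : ℤ) : ℝ) < (D.b:ℝ) + 2 := by
          have hfl : ((⌊(σ.y + σ.s) / 2^ℓ⌋ : ℤ) : ℝ) ≤ (σ.y + σ.s) / 2^ℓ := Int.floor_le _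
          have : (σ.y + σ.s) / 2^ℓ < (D.b:ℝ) + 2 := by
            rw [div_lt_iff₀ hp]; linarith
          linarith
        have : ⌊(σ.y + σ.s) / 2^ℓ⌋ < D.b + 2 := by exact_mod_cast this
        simp only [hbmax] at hbR ⊢
        omega
    -- membership in T
    refine Finset.mem_coe.mpr (Finset.mem_biUnion.mpr ⟨ℓ, Finset.mem_Icc.mpr ⟨hl0, hl1⟩, ?_⟩)
    refine Finset.mem_image.mpr ⟨(D.a, D.b), ?_, rfl⟩
    rcases hpin with h | h
    · exact Finset.mem_union_left _ (Finset.mem_product.mpr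
        ⟨by simp [h], Finset.mem_Icc.mpr ⟨hbL, hbR⟩⟩)
    · exact Finset.mem_union_right _ (Finset.mem_product.mpr
        ⟨Finset.mem_Icc.mpr ⟨haL, haR⟩, by simp [h]⟩)
  -- finiteness
  have hfin : (calC S c σ).Finite := T.finite_toSet.subset hsub
  refine ⟨hfin, ?_⟩
  -- cardinality bound
  have hncard : (calC S c σ).ncard ≤ T.card := by
    rw [← Set.ncard_coe_finset]
    exact Set.ncard_le_ncard hsub T.finite_toSet
  -- per-level bound
  have hFcard : ∀ ℓ : ℤ, ((F ℓ).card : ℝ) ≤ 4 * σ.s * 2^(-ℓ) := by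
    intro ℓ
    have hp := two_zpow_pos ℓ
    have hspow : (0:ℝ) ≤ σ.s * 2^(-ℓ) := by positivity
    have hIa : ((Finset.Icc (amin ℓ) (amax ℓ)).card : ℝ) ≤ σ.s * 2^(-ℓ) := by
      rw [Int.card_Icc]
      have h1 : (amax ℓ : ℝ) + 1 ≤ (σ.x + σ.s) / 2^ℓ := by
        simp only [hamax]
        push_cast
        linarith [Int.floor_le ((σ.x + σ.s) / 2^ℓ)]
      have h2 : σ.x / 2^ℓ ≤ (amin ℓ : ℝ) := Int.le_ceil _
      have hle : ((amax ℓ + 1 - amin ℓ : ℤ) : ℝ) ≤ σ.s * 2^(-ℓ) := by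
        push_cast
        rw [zpow_neg]
        have : (σ.x + σ.s) / 2^ℓ - σ.x / 2^ℓ = σ.s * (2^ℓ:ℝ)⁻¹ := by
          field_simp
          ring
        linarith
      calc (((amax ℓ + 1 - amin ℓ).toNat : ℕ) : ℝ)
          = max ((amax ℓ + 1 - amin ℓ : ℤ) : ℝ) 0 := by
            rw [← Int.cast_natCast, Int.toNat_eq_max, Int.cast_max]; norm_num
        _ ≤ σ.s * 2^(-ℓ) := max_le hle hspow
    have hIb : ((Finset.Icc (bmin ℓ) (bmax ℓ)).card : ℝ) ≤ σ.s * 2^(-ℓ) := by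
      rw [Int.card_Icc]
      have h1 : (bmax ℓ : ℝ) + 1 ≤ (σ.y + σ.s) / 2^ℓ := by
        simp only [hbmax]
        push_cast
        linarith [Int.floor_le ((σ.y + σ.s) / 2^ℓ)]
      have h2 : σ.y / 2^ℓ ≤ (bmin ℓ : ℝ) := Int.le_ceil _
      have hle : ((bmax ℓ + 1 - bmin ℓ : ℤ) : ℝ) ≤ σ.s * 2^(-ℓ) := by
        push_cast
        rw [zpow_neg]
        have : (σ.y + σ.s) / 2^ℓ - σ.y / 2^ℓ = σ.s * (2^ℓ:ℝ)⁻¹ := by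
          field_simp
          ring
        linarith
      calc (((bmax ℓ + 1 - bmin ℓ).toNat : ℕ) : ℝ)
          = max ((bmax ℓ + 1 - bmin ℓ : ℤ) : ℝ) 0 := by
            rw [← Int.cast_natCast, Int.toNat_eq_max, Int.cast_max]; norm_num
        _ ≤ σ.s * 2^(-ℓ) := max_le hle hspow
    have hcard2 : ({amin ℓ, amax ℓ} : Finset ℤ).card ≤ 2 := Finset.card_insert_le _ _ |>.trans (by simp)
    have hcard2' : ({bmin ℓ, bmax ℓ} : Finset ℤ).card ≤ 2 := Finset.card_insert_le _ _ |>.trans (by simp)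
    calc ((F ℓ).card : ℝ)
        ≤ (((({amin ℓ, amax ℓ} : Finset ℤ) ×ˢ Finset.Icc (bmin ℓ) (bmax ℓ)) ∪
           (Finset.Icc (amin ℓ) (amax ℓ) ×ˢ ({bmin ℓ, bmax ℓ} : Finset ℤ))).card : ℝ) := by
          exact_mod_cast Finset.card_image_le
      _ ≤ ((({amin ℓ, amax ℓ} : Finset ℤ) ×ˢ Finset.Icc (bmin ℓ) (bmax ℓ)).card : ℝ) +
          ((Finset.Icc (amin ℓ) (amax ℓ) ×ˢ ({bmin ℓ, bmax ℓ} : Finset ℤ)).card : ℝ) := by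
          exact_mod_cast Finset.card_union_le _ _
      _ ≤ 2 * ((Finset.Icc (bmin ℓ) (bmax ℓ)).card : ℝ) +
          ((Finset.Icc (amin ℓ) (amax ℓ)).card : ℝ) * 2 := by
          rw [Finset.card_product, Finset.card_product]
          push_cast
          have hb0 : (0:ℝ) ≤ ((Finset.Icc (bmin ℓ) (bmax ℓ)).card : ℝ) := by positivity
          have ha0 : (0:ℝ) ≤ ((Finset.Icc (amin ℓ) (amax ℓ)).card : ℝ) := by positivity
          have : (({amin ℓ, amax ℓ} : Finset ℤ).card : ℝ) ≤ 2 := by exact_mod_cast hcard2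
          have : (({bmin ℓ, bmax ℓ} : Finset ℤ).card : ℝ) ≤ 2 := by exact_mod_cast hcard2'
          nlinarith [hcard2, hcard2']
      _ ≤ 2 * (σ.s * 2^(-ℓ)) + (σ.s * 2^(-ℓ)) * 2 := by nlinarith
      _ = 4 * σ.s * 2^(-ℓ) := by ring
  -- summing up
  have hTcard : (T.card : ℝ) ≤ 4 * σ.s * (2 * 2^(-ℓ0)) := by
    calc (T.card : ℝ) ≤ ((∑ ℓ ∈ Finset.Icc ℓ0 ℓ1, (F ℓ).card : ℕ) : ℝ) := by
          exact_mod_cast Finset.card_biUnion_le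
      _ = ∑ ℓ ∈ Finset.Icc ℓ0 ℓ1, ((F ℓ).card : ℝ) := by push_cast; ring
      _ ≤ ∑ ℓ ∈ Finset.Icc ℓ0 ℓ1, 4 * σ.s * 2^(-ℓ) :=
          Finset.sum_le_sum (fun ℓ _ => hFcard ℓ)
      _ = 4 * σ.s * ∑ ℓ ∈ Finset.Icc ℓ0 ℓ1, (2:ℝ)^(-ℓ) := by rw [Finset.mul_sum]
      _ ≤ 4 * σ.s * (2 * 2^(-ℓ0)) := by
          have := geom_sum_Icc_le ℓ0 ℓ1
          nlinarith
  -- 2^(-ℓ0) < 4/d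
  have hℓ0bound : (2:ℝ)^(-ℓ0) ≤ 4 / d := by
    have hd4 : (0:ℝ) < d/4 := by linarith
    have h1 : d/4 < (2:ℝ)^ℓ0 := by
      have := Int.lt_zpow_succ_log_self (by norm_num : 1 < 2) (d/4)
      exact_mod_cast this
    rw [zpow_neg]
    rw [inv_le_comm₀ (two_zpow_pos ℓ0) (by positivity)]
    have h4 : ((4:ℝ)/d)⁻¹ = d/4 := by
      rw [inv_div]
    rw [h4]
    linarith
  calc ((calC S c σ).ncard : ℝ) ≤ (T.card : ℝ) := by exact_mod_cast hncard
    _ ≤ 4 * σ.s * (2 * 2^(-ℓ0)) := hTcard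
    _ ≤ 4 * σ.s * (2 * (4/d)) := by
        have h0 : (0:ℝ) ≤ 2^(-ℓ0) := le_of_lt (two_zpow_pos (-ℓ0))
        nlinarith
    _ = 32 * (σ.s / d) := by field_simp; ring
    _ ≤ 32 * ψ := by
        have : σ.s / d ≤ ψ := by rw [div_le_iff₀ hd]; linarith
        linarith
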